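/- arXiv:1411.6390 — 2 statements merged into one kernel-verified Lean document; each statement's English description precedes it below -/
import Mathlib

section
/- Let N₁, N₂ ≥ 2 be coprime integers and N = N₁N₂, and let a, b be integers with aN₂ + bN₁ = 1. Then the permutation unitary S : ℂ^N → ℂ^{N₁} ⊗ ℂ^{N₂} induced by the Chinese Remainder Theorem bijection ρ mod N ↦ (ρ mod N₁, ρ mod N₂) satisfies S P_N S^{−1} = P_{N₁} ⊗ P_{N₂} and S Q_N S^{−1} = Q_{N₁}^a ⊗ Q_{N₂}^b. In particular, the discrete Weyl system in dimension N factorizes as a tensor product of the Weyl systems in the coprime dimensions N₁ and N₂. -/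
open Matrix Complex

/-- `ω_N = e^{2πi/N}`. -/
noncomputable def omegaN (N : ℕ) : ℂ := Complex.exp (2 * Real.pi * Complex.I / N)

/-- The generalized Pauli matrix `Q_N = diag(1, ω_N, …, ω_N^{N-1})`. -/
noncomputable def pauliQ (N : ℕ) : Matrix (Fin N) (Fin N) ℂ :=
  Matrix.diagonal fun ρ => omegaN N ^ (ρ : ℕ)

/-- The generalized Pauli matrix `P_N` with entries `(P_N)_{ρσ} = δ_{ρ+1,σ}` (indices mod N). -/
def pauliP (N : ℕ) : Matrix (Fin N) (Fin N) ℂ :=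
  Matrix.of fun ρ σ => if ((ρ : ℕ) + 1) % N = (σ : ℕ) then 1 else 0

/- ### Auxiliary lemmas -/

lemma aux_pow_mod {G : Type*} [Monoid G] (x : G) {k : ℕ} (h : x ^ k = 1) (n : ℕ) :
    x ^ n = x ^ (n % k) := by
  conv_lhs => rw [← Nat.mod_add_div n k, pow_add, pow_mul, h, one_pow, mul_one]

lemma aux_omega_pow_self {m : ℕ} (hm : 0 < m) : omegaN m ^ m = 1 := by
  rw [omegaN, ← Complex.exp_nat_mul]
  have hm' : (m : ℂ) ≠ 0 := Nat.cast_ne_zero.mpr hm.ne'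
  rw [show (m : ℂ) * (2 * Real.pi * Complex.I / m) = 2 * Real.pi * Complex.I by
    field_simp]
  exact Complex.exp_two_pi_mul_I

lemma aux_crt_unique {N₁ N₂ : ℕ} (hcop : Nat.Coprime N₁ N₂) {x y : ℕ}
    (hx : x < N₁ * N₂) (hy : y < N₁ * N₂) (h1 : x % N₁ = y % N₁) (h2 : x % N₂ = y % N₂) :
    x = y := by
  have := (Nat.modEq_and_modEq_iff_modEq_mul hcop).mp ⟨h1, h2⟩
  rwa [Nat.ModEq, Nat.mod_eq_of_lt hx, Nat.mod_eq_of_lt hy] at this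

lemma aux_matrix_zpow {n : ℕ} (M : Matrix (Fin n) (Fin n) ℂ) {k : ℕ} (hk : 0 < k)
    (h : M ^ k = 1) (z : ℤ) : M ^ z = M ^ (z % k).toNat := by
  have hu : IsUnit M.det := by
    have h1 : IsUnit (M ^ k).det := by rw [h]; simp
    rw [Matrix.det_pow] at h1
    exact (isUnit_pow_iff hk.ne').mp h1
  have h0 : (0 : ℤ) ≤ z % k := Int.emod_nonneg z (by exact_mod_cast hk.ne')
  conv_lhs => rw [← Int.emod_add_mul_ediv z k]
  rw [Matrix.zpow_add hu, Matrix.zpow_mul M hu, zpow_natCast, h, Matrix.one_zpow,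
    mul_one, ← zpow_natCast, Int.toNat_of_nonneg h0]

lemma aux_pauliQ_pow (m k : ℕ) :
    pauliQ m ^ k = Matrix.diagonal (fun ρ : Fin m => omegaN m ^ ((ρ : ℕ) * k)) := by
  rw [pauliQ, Matrix.diagonal_pow]
  ext ρ σ
  by_cases h : ρ = σ <;> simp [Matrix.diagonal_apply, h, pow_mul]

lemma aux_pauliQ_pow_self {m : ℕ} (hm : 0 < m) : pauliQ m ^ m = 1 := by
  rw [aux_pauliQ_pow]
  have : (fun ρ : Fin m => omegaN m ^ ((ρ : ℕ) * m)) = fun _ => 1 := by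
    funext ρ
    rw [mul_comm, pow_mul, aux_omega_pow_self hm, one_pow]
  rw [this, Matrix.diagonal_one]

lemma aux_modeq (m k : ℕ) (hm : m ≠ 0) (a c : ℤ) (hac : a * k + c * m = 1) (r t : ℕ) :
    (k * (r % m * (a % m).toNat) + m * t) ≡ r [MOD m] := by
  rw [← ZMod.natCast_eq_natCast_iff]
  have ha' : (((a % m).toNat : ℕ) : ZMod m) = (a : ZMod m) := by
    have h1 : (((a % m).toNat : ℤ)) = a % m :=
      Int.toNat_of_nonneg (Int.emod_nonneg a (Int.natCast_ne_zero.mpr hm))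
    have h2 : (((a % m).toNat : ℤ) : ZMod m) = ((a : ℤ) : ZMod m) := by
      rw [h1, ZMod.intCast_eq_intCast_iff]
      exact Int.emod_emod_of_dvd a dvd_rfl
    exact_mod_cast h2
  have habz : (a : ZMod m) * (k : ZMod m) + (c : ZMod m) * (m : ZMod m) = 1 := by
    have := congrArg (fun z : ℤ => (z : ZMod m)) hac
    push_cast at this
    simpa using this
  push_cast [ZMod.natCast_mod]
  rw [ha']
  linear_combination (r : ZMod m) * habz +
    ((t : ZMod m) - (r : ZMod m) * (c : ZMod m)) * ZMod.natCast_self m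

lemma aux_main (N₁ N₂ : ℕ) (h₁ : 2 ≤ N₁) (h₂ : 2 ≤ N₂) (hcop : Nat.Coprime N₁ N₂)
    (a b : ℤ) (hab : a * N₂ + b * N₁ = 1) (r : ℕ) :
    omegaN (N₁ * N₂) ^ r
      = omegaN N₁ ^ (r % N₁ * (a % N₁).toNat) * omegaN N₂ ^ (r % N₂ * (b % N₂).toNat) := by
  have h₁0 : 0 < N₁ := by omega
  have h₂0 : 0 < N₂ := by omega
  have c1 : (N₁ : ℂ) ≠ 0 := Nat.cast_ne_zero.mpr h₁0.ne'
  have c2 : (N₂ : ℂ) ≠ 0 := Nat.cast_ne_zero.mpr h₂0.ne'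
  have hω₁ : omegaN N₁ = omegaN (N₁ * N₂) ^ N₂ := by
    rw [omegaN, omegaN, ← Complex.exp_nat_mul]
    congr 1
    push_cast
    field_simp
  have hω₂ : omegaN N₂ = omegaN (N₁ * N₂) ^ N₁ := by
    rw [omegaN, omegaN, ← Complex.exp_nat_mul]
    congr 1
    push_cast
    field_simp
  rw [hω₁, hω₂, ← pow_mul, ← pow_mul, ← pow_add]
  have hωN : omegaN (N₁ * N₂) ^ (N₁ * N₂) = 1 :=
    aux_omega_pow_self (by positivity)
  have hm1 : (N₂ * (r % N₁ * (a % N₁).toNat) + N₁ * (r % N₂ * (b % N₂).toNat)) ≡ r [MOD N₁] :=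
    aux_modeq N₁ N₂ h₁0.ne' a b hab r _
  have hm2 : (N₂ * (r % N₁ * (a % N₁).toNat) + N₁ * (r % N₂ * (b % N₂).toNat)) ≡ r [MOD N₂] := by
    have h := aux_modeq N₂ N₁ h₂0.ne' b a (by rw [← hab]; ring) r (r % N₁ * (a % N₁).toNat)
    rwa [Nat.add_comm] at h
  have hE : (N₂ * (r % N₁ * (a % N₁).toNat) + N₁ * (r % N₂ * (b % N₂).toNat)) % (N₁ * N₂)
      = r % (N₁ * N₂) := (Nat.modEq_and_modEq_iff_modEq_mul hcop).mp ⟨hm1, hm2⟩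
  rw [aux_pow_mod _ hωN (N₂ * (r % N₁ * (a % N₁).toNat) + N₁ * (r % N₂ * (b % N₂).toNat)),
    hE, ← aux_pow_mod _ hωN r]

/-- Chinese-Remainder factorization of the discrete Weyl system: for coprime
`N₁, N₂ ≥ 2`, `N = N₁N₂` and Bézout coefficients `a N₂ + b N₁ = 1`, the permutation
matrix `S` induced by `ρ mod N ↦ (ρ mod N₁, ρ mod N₂)` is unitary and satisfies
`S P_N S⁻¹ = P_{N₁} ⊗ P_{N₂}` and `S Q_N S⁻¹ = Q_{N₁}^a ⊗ Q_{N₂}^b`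
(tensor products realized as Kronecker products). -/
theorem weyl_system_crt_factorization (N₁ N₂ N : ℕ) (h₁ : 2 ≤ N₁) (h₂ : 2 ≤ N₂)
    (hcop : Nat.Coprime N₁ N₂) (hN : N = N₁ * N₂) (a b : ℤ)
    (hab : a * N₂ + b * N₁ = 1)
    (S : Matrix (Fin N₁ × Fin N₂) (Fin N) ℂ)
    (hS : S = Matrix.of fun (p : Fin N₁ × Fin N₂) (ρ : Fin N) =>
      if (ρ : ℕ) % N₁ = (p.1 : ℕ) ∧ (ρ : ℕ) % N₂ = (p.2 : ℕ) then 1 else 0) :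
    S * Sᴴ = 1 ∧ Sᴴ * S = 1 ∧
    S * pauliP N * Sᴴ = Matrix.kroneckerMap (· * ·) (pauliP N₁) (pauliP N₂) ∧
    S * pauliQ N * Sᴴ = Matrix.kroneckerMap (· * ·) (pauliQ N₁ ^ a) (pauliQ N₂ ^ b) := by
  subst hN
  have h₁0 : 0 < N₁ := by omega
  have h₂0 : 0 < N₂ := by omega
  set f : Fin (N₁ * N₂) → Fin N₁ × Fin N₂ := fun ρ =>
    (⟨(ρ : ℕ) % N₁, Nat.mod_lt _ h₁0⟩, ⟨(ρ : ℕ) % N₂, Nat.mod_lt _ h₂0⟩) with hf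
  have hfinj : Function.Injective f := by
    intro ρ σ h
    rw [hf, Prod.ext_iff] at h
    obtain ⟨ha', hb'⟩ := h
    simp only [Fin.mk.injEq] at ha' hb'
    exact Fin.ext (aux_crt_unique hcop ρ.isLt σ.isLt ha' hb')
  have hfbij : Function.Bijective f :=
    (Fintype.bijective_iff_injective_and_card f).mpr ⟨hfinj, by simp⟩
  set e : Fin (N₁ * N₂) ≃ Fin N₁ × Fin N₂ := Equiv.ofBijective f hfbij with he
  have hef : ∀ ρ, e ρ = f ρ := fun ρ => rfl
  have hg1 : ∀ p : Fin N₁ × Fin N₂, ((e.symm p : Fin (N₁ * N₂)) : ℕ) % N₁ = (p.1 : ℕ) := by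
    intro p
    have h := e.apply_symm_apply p
    rw [hef, hf] at h
    exact congrArg (fun q => (q.1 : ℕ)) h
  have hg2 : ∀ p : Fin N₁ × Fin N₂, ((e.symm p : Fin (N₁ * N₂)) : ℕ) % N₂ = (p.2 : ℕ) := by
    intro p
    have h := e.apply_symm_apply p
    rw [hef, hf] at h
    exact congrArg (fun q => (q.2 : ℕ)) h
  have hS' : ∀ (p : Fin N₁ × Fin N₂) (ρ : Fin (N₁ * N₂)),
      S p ρ = if ρ = e.symm p then (1 : ℂ) else 0 := by
    intro p ρ
    rw [hS]
    simp only [Matrix.of_apply]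
    congr 1
    rw [eq_comm (a := ρ), Equiv.symm_apply_eq, hef, hf, Prod.ext_iff]
    simp [Fin.ext_iff, eq_comm]
  have hSH' : ∀ (ρ : Fin (N₁ * N₂)) (p : Fin N₁ × Fin N₂),
      Sᴴ ρ p = if ρ = e.symm p then (1 : ℂ) else 0 := by
    intro ρ p
    rw [Matrix.conjTranspose_apply, hS']
    split <;> simp
  have hSSH : S * Sᴴ = 1 := by
    ext p q
    rw [Matrix.mul_apply]
    simp only [hS', hSH', ite_mul, one_mul, zero_mul, Matrix.one_apply]
    rw [Finset.sum_ite_eq' Finset.univ (e.symm p) (fun σ => if σ = e.symm q then (1:ℂ) else 0)]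
    simp only [Finset.mem_univ, if_true]
    by_cases hpq : p = q
    · simp [hpq]
    · have : e.symm p ≠ e.symm q := fun h => hpq (e.symm.injective h)
      simp [hpq, this]
  have hSHS : Sᴴ * S = 1 := by
    ext ρ σ
    rw [Matrix.mul_apply]
    simp only [hS', hSH', ite_mul, one_mul, zero_mul, Matrix.one_apply]
    have hcond : ∀ p : Fin N₁ × Fin N₂,
        (if ρ = e.symm p then (if σ = e.symm p then (1:ℂ) else 0) else 0)
          = if p = e ρ then (if σ = e.symm p then (1:ℂ) else 0) else 0 := by
      intro p
      congr 1
      rw [eq_comm (a := ρ), Equiv.symm_apply_eq, eq_comm]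
    simp only [hcond]
    rw [Finset.sum_ite_eq' Finset.univ (e ρ) (fun p => if σ = e.symm p then (1:ℂ) else 0)]
    simp only [Finset.mem_univ, if_true, Equiv.symm_apply_apply]
    by_cases h : ρ = σ
    · simp [h]
    · rw [if_neg (fun hh : σ = ρ => h hh.symm), if_neg h]
  have key : ∀ (M : Matrix (Fin (N₁ * N₂)) (Fin (N₁ * N₂)) ℂ) (p q : Fin N₁ × Fin N₂),
      (S * M * Sᴴ) p q = M (e.symm p) (e.symm q) := by
    intro M p q
    rw [Matrix.mul_apply]
    simp only [Matrix.mul_apply, hS', hSH', ite_mul, one_mul, zero_mul, mul_ite, mul_one, mul_zero]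
    have inner : ∀ σ : Fin (N₁ * N₂),
        (∑ ρ : Fin (N₁ * N₂), if ρ = e.symm p then M ρ σ else 0) = M (e.symm p) σ := by
      intro σ
      rw [Finset.sum_ite_eq' Finset.univ (e.symm p) (fun ρ => M ρ σ)]
      simp
    simp only [inner]
    have hmem : ∀ σ : Fin (N₁ * N₂), (if σ = e.symm q then M (e.symm p) σ else 0)
        = if σ = e.symm q then M (e.symm p) (e.symm q) else 0 := by
      intro σ; split <;> simp_all
    simp only [hmem]
    rw [Finset.sum_ite_eq' Finset.univ (e.symm q) (fun _ => M (e.symm p) (e.symm q))]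
    simp
  refine ⟨hSSH, hSHS, ?_, ?_⟩
  · ext p q
    rw [key]
    have hr1 : ((e.symm p : Fin (N₁ * N₂)) : ℕ) % N₁ = (p.1 : ℕ) := hg1 p
    have hr2 : ((e.symm p : Fin (N₁ * N₂)) : ℕ) % N₂ = (p.2 : ℕ) := hg2 p
    have hs1 : ((e.symm q : Fin (N₁ * N₂)) : ℕ) % N₁ = (q.1 : ℕ) := hg1 q
    have hs2 : ((e.symm q : Fin (N₁ * N₂)) : ℕ) % N₂ = (q.2 : ℕ) := hg2 q
    set r : ℕ := ((e.symm p : Fin (N₁ * N₂)) : ℕ) with hrdef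
    set s : ℕ := ((e.symm q : Fin (N₁ * N₂)) : ℕ) with hsdef
    have one1 : 1 % N₁ = 1 := Nat.mod_eq_of_lt (by omega)
    have one2 : 1 % N₂ = 1 := Nat.mod_eq_of_lt (by omega)
    have m1 : (r + 1) % (N₁ * N₂) % N₁ = ((p.1 : ℕ) + 1) % N₁ := by
      rw [Nat.mod_mod_of_dvd _ (dvd_mul_right N₁ N₂), Nat.add_mod, hr1, one1]
    have m2 : (r + 1) % (N₁ * N₂) % N₂ = ((p.2 : ℕ) + 1) % N₂ := by
      rw [Nat.mod_mod_of_dvd _ (dvd_mul_left N₂ N₁), Nat.add_mod, hr2, one2]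
    have hiff : ((r + 1) % (N₁ * N₂) = s) ↔
        (((p.1 : ℕ) + 1) % N₁ = (q.1 : ℕ) ∧ ((p.2 : ℕ) + 1) % N₂ = (q.2 : ℕ)) := by
      constructor
      · intro h
        constructor
        · rw [← hs1, ← h, m1]
        · rw [← hs2, ← h, m2]
      · rintro ⟨ha', hb'⟩
        refine aux_crt_unique hcop (Nat.mod_lt _ (by positivity)) (e.symm q).isLt ?_ ?_
        · rw [m1, ha', hs1]
        · rw [m2, hb', hs2]
    simp only [pauliP, Matrix.of_apply, Matrix.kroneckerMap_apply]
    rw [if_congr hiff rfl rfl]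
    by_cases hA : ((p.1 : ℕ) + 1) % N₁ = (q.1 : ℕ) <;>
      by_cases hB : ((p.2 : ℕ) + 1) % N₂ = (q.2 : ℕ) <;> simp [hA, hB]
  · have hQa : pauliQ N₁ ^ a
        = Matrix.diagonal (fun ρ : Fin N₁ => omegaN N₁ ^ ((ρ : ℕ) * (a % N₁).toNat)) := by
      rw [aux_matrix_zpow _ h₁0 (aux_pauliQ_pow_self h₁0), aux_pauliQ_pow]
    have hQb : pauliQ N₂ ^ b
        = Matrix.diagonal (fun ρ : Fin N₂ => omegaN N₂ ^ ((ρ : ℕ) * (b % N₂).toNat)) := by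
      rw [aux_matrix_zpow _ h₂0 (aux_pauliQ_pow_self h₂0), aux_pauliQ_pow]
    ext p q
    rw [key, hQa, hQb]
    simp only [pauliQ, Matrix.kroneckerMap_apply, Matrix.diagonal_apply]
    by_cases hpq : p = q
    · subst hpq
      simp only [if_pos rfl]
      have := aux_main N₁ N₂ h₁ h₂ hcop a b hab ((e.symm p : Fin (N₁ * N₂)) : ℕ)
      rw [hg1 p, hg2 p] at this
      exact this
    · have h1 : e.symm p ≠ e.symm q := fun h => hpq (e.symm.injective h)
      have h2 : ¬(p.1 = q.1 ∧ p.2 = q.2) := by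
        rw [← Prod.ext_iff]; exact hpq
      rw [if_neg h1]
      by_cases hc1 : p.1 = q.1
      · have hc2 : p.2 ≠ q.2 := fun h => h2 ⟨hc1, h⟩
        rw [if_neg hc2, mul_zero]
      · rw [if_neg hc1, zero_mul]
end

section
/- Let N = p₁^{r₁} ⋯ p_f^{r_f} with mutually distinct primes p₁, …, p_f and set N_k = p_k^{r_k}. Then there exists a unitary matrix S and integers a₁, …, a_f such that S P_N S^{−1} = P_{N₁} ⊗ ⋯ ⊗ P_{N_f} and S Q_N S^{−1} = Q_{N₁}^{a₁} ⊗ ⋯ ⊗ Q_{N_f}^{a_f}; that is, the discrete Weyl system of composite dimension N is unitarily equivalent to the tensor product of the constituent Weyl systems acting in Hilbert spaces of the pairwise coprime prime-power dimensions p₁^{r₁}, …, p_f^{r_f}. -/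
open Matrix Complex

/-! The Chinese remainder theorem gives a ring isomorphism `ℤ/N ≃ ∏ₖ ℤ/Nₖ`; relabelling the
standard basis along it is a permutation matrix `S`. Because the isomorphism is additive and
sends `1` to `1`, conjugation by `S` turns the shift `P_N` into the tensor product of the shifts.
Writing `Mₖ = N / Nₖ` and `aₖ` for an inverse of `Mₖ` modulo `Nₖ`, the tuple `x` corresponds to
`∑ₖ Mₖ aₖ xₖ mod N`, and `ω_N ^ Mₖ = ω_{Nₖ}`, so the diagonal of `Q_N` becomes
`∏ₖ ω_{Nₖ} ^ (aₖ xₖ)`. -/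

open scoped Function

lemma omegaN_pow_self (n : ℕ) : omegaN n ^ n = 1 := by
  rcases eq_or_ne n 0 with rfl | hn
  · simp
  · rw [omegaN, ← Complex.exp_nat_mul, mul_div_cancel₀ _ (Nat.cast_ne_zero.mpr hn),
      Complex.exp_two_pi_mul_I]

lemma omegaN_pow_mod (n m : ℕ) : omegaN n ^ (m % n) = omegaN n ^ m := by
  conv_rhs => rw [← Nat.mod_add_div m n, pow_add, pow_mul, omegaN_pow_self, one_pow, mul_one]

lemma omegaN_mul_pow {d : ℕ} (hd : d ≠ 0) (m : ℕ) : omegaN (d * m) ^ d = omegaN m := by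
  rcases eq_or_ne m 0 with rfl | hm
  · simp [omegaN]
  · rw [omegaN, omegaN, ← Complex.exp_nat_mul]
    congr 1
    push_cast
    field_simp

lemma pauliP_apply (n : ℕ) [NeZero n] (a b : Fin n) :
    pauliP n a b = if a + 1 = b then 1 else 0 := by
  simp only [pauliP, of_apply, Fin.ext_iff, Fin.val_add, Fin.val_one', Nat.add_mod_mod]

lemma pauliQ_pow (n k : ℕ) :
    pauliQ n ^ k = diagonal fun a : Fin n => omegaN n ^ ((a : ℕ) * k) := by
  simp [pauliQ, diagonal_pow, pow_mul]

lemma exists_natCast_mul_eq_one (R : Type*) [Ring R] {m n : ℕ} [NeZero n] [CharP R n]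
    (h : m.Coprime n) : ∃ a : ℕ, ((m * a : ℕ) : R) = 1 := by
  refine ⟨((m : ZMod n)⁻¹).val, ?_⟩
  rw [← map_natCast (ZMod.castHom dvd_rfl R), Nat.cast_mul, ZMod.natCast_zmod_val,
    ZMod.coe_mul_inv_eq_one _ h, map_one]

section PermutationMatrix

variable {m n α : Type*} [DecidableEq m] [DecidableEq n] [Semiring α] [StarRing α] (e : m ≃ n)

lemma conjTranspose_toMatrix_toPEquiv :
    (e.toPEquiv.toMatrix : Matrix m n α)ᴴ = e.symm.toPEquiv.toMatrix := by
  ext i j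
  simp [PEquiv.toMatrix_apply, apply_ite star, Equiv.eq_symm_apply, eq_comm]

lemma toMatrix_toPEquiv_mul_conjTranspose [Fintype n] :
    (e.toPEquiv.toMatrix : Matrix m n α) * (e.toPEquiv.toMatrix : Matrix m n α)ᴴ = 1 := by
  rw [conjTranspose_toMatrix_toPEquiv, ← PEquiv.toMatrix_trans, ← Equiv.toPEquiv_trans,
    Equiv.self_trans_symm, Equiv.toPEquiv_refl, PEquiv.toMatrix_refl]

lemma conjTranspose_toMatrix_toPEquiv_mul [Fintype m] :
    (e.toPEquiv.toMatrix : Matrix m n α)ᴴ * (e.toPEquiv.toMatrix : Matrix m n α) = 1 := by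
  rw [conjTranspose_toMatrix_toPEquiv, ← PEquiv.toMatrix_trans, ← Equiv.toPEquiv_trans,
    Equiv.symm_trans_self, Equiv.toPEquiv_refl, PEquiv.toMatrix_refl]

lemma toMatrix_toPEquiv_mul_mul_conjTranspose [Fintype n] (M : Matrix n n α) :
    (e.toPEquiv.toMatrix : Matrix m n α) * M * (e.toPEquiv.toMatrix : Matrix m n α)ᴴ =
      M.submatrix e e := by
  rw [conjTranspose_toMatrix_toPEquiv, PEquiv.toMatrix_toPEquiv_mul,
    PEquiv.mul_toMatrix_toPEquiv, submatrix_submatrix, e.symm_symm]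
  rfl

end PermutationMatrix

instance {ι : Type*} [Fintype ι] (n : ι → ℕ) [∀ i, NeZero (n i)] : NeZero (∏ i, n i) :=
  ⟨Finset.prod_ne_zero_iff.mpr fun i _ => NeZero.ne (n i)⟩

section ChineseRemainder

open Fin.CommRing Fin.NatCast

variable {ι : Type*} [Fintype ι] (n : ι → ℕ) [∀ i, NeZero (n i)] (h : Pairwise (Nat.Coprime on n))

noncomputable def Fin.prodRingEquivPi : Fin (∏ i, n i) ≃+* ∀ i, Fin (n i) :=
  (ZMod.finEquiv _).trans <| (ZMod.prodEquivPi n h).trans <|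
    RingEquiv.piCongrRight fun i => (ZMod.finEquiv (n i)).symm

lemma pauliP_submatrix_prodRingEquivPi_symm :
    (pauliP (∏ i, n i)).submatrix (Fin.prodRingEquivPi n h).symm (Fin.prodRingEquivPi n h).symm =
      of fun x y => ∏ i, pauliP (n i) (x i) (y i) := by
  ext x y
  have hshift : (Fin.prodRingEquivPi n h).symm x + 1 = (Fin.prodRingEquivPi n h).symm y ↔
      ∀ i, x i + 1 = y i := by
    rw [← map_one (Fin.prodRingEquivPi n h).symm, ← map_add, EquivLike.apply_eq_iff_eq, funext_iff]
    rfl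
  simp only [submatrix_apply, of_apply, pauliP_apply, Fintype.prod_boole, hshift]

variable [DecidableEq ι]

lemma prodRingEquivPi_symm_eq_natCast_sum (a : ι → ℕ)
    (ha : ∀ i, (((∏ j ∈ Finset.univ.erase i, n j) * a i : ℕ) : Fin (n i)) = 1)
    (x : ∀ i, Fin (n i)) :
    (Fin.prodRingEquivPi n h).symm x =
      ((∑ i, (∏ j ∈ Finset.univ.erase i, n j) * a i * x i : ℕ) : Fin (∏ i, n i)) := by
  rw [RingEquiv.symm_apply_eq, map_natCast]
  funext j
  rw [Pi.natCast_apply, Nat.cast_sum, Finset.sum_eq_single j]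
  · rw [Nat.cast_mul, ha, one_mul, Fin.cast_val_eq_self]
  · intro i _ hij
    rw [CharP.cast_eq_zero_iff (Fin (n j)) (n j)]
    exact Dvd.dvd.mul_right (Dvd.dvd.mul_right
      (Finset.dvd_prod_of_mem n (Finset.mem_erase.mpr ⟨hij.symm, Finset.mem_univ j⟩)) _) _
  · simp

lemma omegaN_pow_val_prodRingEquivPi_symm (a : ι → ℕ)
    (ha : ∀ i, (((∏ j ∈ Finset.univ.erase i, n j) * a i : ℕ) : Fin (n i)) = 1)
    (x : ∀ i, Fin (n i)) :
    omegaN (∏ i, n i) ^ ((Fin.prodRingEquivPi n h).symm x : ℕ) =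
      ∏ i, omegaN (n i) ^ ((x i : ℕ) * a i) := by
  rw [prodRingEquivPi_symm_eq_natCast_sum n h a ha, Fin.val_natCast, omegaN_pow_mod,
    ← Finset.prod_pow_eq_pow_sum]
  refine Finset.prod_congr rfl fun i _ => ?_
  have hcofactor : ∏ j ∈ Finset.univ.erase i, n j ≠ 0 :=
    Finset.prod_ne_zero_iff.mpr fun j _ => NeZero.ne (n j)
  rw [mul_assoc, pow_mul, ← Finset.prod_erase_mul Finset.univ n (Finset.mem_univ i),
    omegaN_mul_pow hcofactor, mul_comm]

lemma exists_pauliQ_submatrix_prodRingEquivPi_symm : ∃ a : ι → ℕ,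
    (pauliQ (∏ i, n i)).submatrix (Fin.prodRingEquivPi n h).symm (Fin.prodRingEquivPi n h).symm =
      of fun x y => ∏ i, (pauliQ (n i) ^ a i) (x i) (y i) := by
  have hcop : ∀ i, (∏ j ∈ Finset.univ.erase i, n j).Coprime (n i) := fun i =>
    Nat.Coprime.prod_left fun j hj => h (Finset.ne_of_mem_erase hj)
  choose a ha using fun i => exists_natCast_mul_eq_one (Fin (n i)) (hcop i)
  refine ⟨a, ?_⟩
  ext x y
  simp only [submatrix_apply, of_apply, pauliQ_pow]
  simp only [pauliQ, diagonal_apply, EquivLike.apply_eq_iff_eq, Fintype.prod_ite_zero,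
    ← funext_iff, omegaN_pow_val_prodRingEquivPi_symm n h a ha]

end ChineseRemainder

theorem exists_unitary_conj_pauli_eq_pi {ι : Type*} [Fintype ι] [DecidableEq ι] (n : ι → ℕ)
    [∀ i, NeZero (n i)] (h : Pairwise (Nat.Coprime on n)) :
    ∃ (S : Matrix (∀ i, Fin (n i)) (Fin (∏ i, n i)) ℂ) (a : ι → ℕ),
      S * Sᴴ = 1 ∧ Sᴴ * S = 1 ∧
      S * pauliP (∏ i, n i) * Sᴴ = of (fun x y => ∏ i, pauliP (n i) (x i) (y i)) ∧
      S * pauliQ (∏ i, n i) * Sᴴ = of (fun x y => ∏ i, (pauliQ (n i) ^ a i) (x i) (y i)) := by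
  obtain ⟨a, ha⟩ := exists_pauliQ_submatrix_prodRingEquivPi_symm n h
  refine ⟨(Fin.prodRingEquivPi n h).symm.toEquiv.toPEquiv.toMatrix, a,
    toMatrix_toPEquiv_mul_conjTranspose _, conjTranspose_toMatrix_toPEquiv_mul _, ?_, ?_⟩
  · rw [toMatrix_toPEquiv_mul_mul_conjTranspose]
    exact pauliP_submatrix_prodRingEquivPi_symm n h
  · rw [toMatrix_toPEquiv_mul_mul_conjTranspose]
    exact ha

theorem weyl_system_prime_power_factorization_general (f : ℕ) (p r : Fin f → ℕ)
    (hp : ∀ i, (p i).Prime) (hinj : Function.Injective p)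
    (N : ℕ) (hN : N = ∏ i, p i ^ r i) (Nk : Fin f → ℕ) (hNk : ∀ i, Nk i = p i ^ r i) :
    ∃ (S : Matrix (∀ i, Fin (Nk i)) (Fin N) ℂ) (a : Fin f → ℤ),
      S * Sᴴ = 1 ∧ Sᴴ * S = 1 ∧
      S * pauliP N * Sᴴ =
        Matrix.of (fun x y : ∀ i, Fin (Nk i) => ∏ i, pauliP (Nk i) (x i) (y i)) ∧
      S * pauliQ N * Sᴴ =
        Matrix.of (fun x y : ∀ i, Fin (Nk i) => ∏ i, (pauliQ (Nk i) ^ (a i)) (x i) (y i)) := by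
  obtain rfl : Nk = fun i => p i ^ r i := funext hNk
  subst hN
  have : ∀ i, NeZero (p i ^ r i) := fun i => ⟨pow_ne_zero _ (hp i).ne_zero⟩
  have hcop : Pairwise (Nat.Coprime on fun i => p i ^ r i) := fun i j hij =>
    Nat.Coprime.pow _ _ ((Nat.coprime_primes (hp i) (hp j)).mpr (hinj.ne hij))
  obtain ⟨S, a, hSSH, hSHS, hP, hQ⟩ := exists_unitary_conj_pauli_eq_pi _ hcop
  exact ⟨S, fun i => a i, hSSH, hSHS, hP, by simpa only [zpow_natCast] using hQ⟩

/-- Factorization of the discrete Weyl system into prime-power constituents: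
if `N = p₁^{r₁} ⋯ p_f^{r_f}` with mutually distinct primes and `N_k = p_k^{r_k}`,
there are a unitary `S` and integers `a₁, …, a_f` with
`S P_N S⁻¹ = P_{N₁} ⊗ ⋯ ⊗ P_{N_f}` and `S Q_N S⁻¹ = Q_{N₁}^{a₁} ⊗ ⋯ ⊗ Q_{N_f}^{a_f}`,
the `f`-fold tensor (Kronecker) product being realized on the index type `Π i, Fin (Nk i)`
by entrywise products. -/
theorem weyl_system_prime_power_factorization (f : ℕ) (p r : Fin f → ℕ)
    (hp : ∀ i, (p i).Prime) (hinj : Function.Injective p) (hr : ∀ i, 1 ≤ r i)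
    (N : ℕ) (hN : N = ∏ i, p i ^ r i) (Nk : Fin f → ℕ) (hNk : ∀ i, Nk i = p i ^ r i) :
    ∃ (S : Matrix (∀ i, Fin (Nk i)) (Fin N) ℂ) (a : Fin f → ℤ),
      S * Sᴴ = 1 ∧ Sᴴ * S = 1 ∧
      S * pauliP N * Sᴴ =
        Matrix.of (fun x y : ∀ i, Fin (Nk i) => ∏ i, pauliP (Nk i) (x i) (y i)) ∧
      S * pauliQ N * Sᴴ =
        Matrix.of (fun x y : ∀ i, Fin (Nk i) => ∏ i, (pauliQ (Nk i) ^ (a i)) (x i) (y i)) :=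
  weyl_system_prime_power_factorization_general f p r hp hinj N hN Nk hNk
end
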